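/- Let b > 0, d ∈ ℕ, and let c, c′ ∈ ℝ^d satisfy |{j : c_j ≠ c′_j}| ≤ Δ₀ and |c_j − c′_j| ≤ Δ∞ for all j. Let P be the product of Laplace distributions with locations c_j and scale b, and Q the product of Laplace distributions with locations c′_j and scale b. Then for all λ > 1, D_λ(P‖Q) ≤ λ·Δ₀·Δ∞²/(2b²) and D_λ(Q‖P) ≤ λ·Δ₀·Δ∞²/(2b²). -/

import Mathlib

open MeasureTheory ProbabilityTheory Real

/-- The Rényi divergence of order `l` between measures `P` and `Q`:
`D_l(P‖Q) = (1/(l−1))·log ∫ (dP/dQ)^l dQ`. -/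
noncomputable def renyiDiv {Y : Type*} [MeasurableSpace Y] (P Q : Measure Y) (l : ℝ) : ℝ :=
  (l - 1)⁻¹ * Real.log (∫ y, (P.rnDeriv Q y).toReal ^ l ∂Q)

/-- A pair of probability measures `(P, Q)` satisfies `δ`-approximate `ρ`-CDP:
there exist probability measures `P', P'', Q', Q''` with `P = (1−δ)P' + δP''` and
`Q = (1−δ)Q' + δQ''` such that `D_l(P'‖Q') ≤ ρ·l` and `D_l(Q'‖P') ≤ ρ·l` for all `l > 1`. -/
def IsApproxCDPPair {Y : Type*} [MeasurableSpace Y] (P Q : Measure Y) (ρ δ : ℝ) : Prop :=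
  ∃ P' P'' Q' Q'' : Measure Y,
    IsProbabilityMeasure P' ∧ IsProbabilityMeasure P'' ∧
      IsProbabilityMeasure Q' ∧ IsProbabilityMeasure Q'' ∧
      P = ENNReal.ofReal (1 - δ) • P' + ENNReal.ofReal δ • P'' ∧
      Q = ENNReal.ofReal (1 - δ) • Q' + ENNReal.ofReal δ • Q'' ∧
      ∀ l : ℝ, 1 < l → renyiDiv P' Q' l ≤ ρ * l ∧ renyiDiv Q' P' l ≤ ρ * l

/-- The Laplace distribution with location `μ` and scale `b`, with density
`(1/(2b))·exp(−|z−μ|/b)` with respect to Lebesgue measure. -/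
noncomputable def laplace (b μ : ℝ) : Measure ℝ :=
  volume.withDensity fun z => ENNReal.ofReal ((2 * b)⁻¹ * Real.exp (-|z - μ| / b))


section AuxiliaryLemmas
open Real Set MeasureTheory
open scoped ENNReal

universe u


lemma aux_k (u : ℝ) (hu : 0 ≤ u) : (2 - u) * Real.exp u ≤ 2 + u := by
  have key : ∀ v ∈ Set.Ici (0:ℝ), 2 - v ≤ (2 + v) * Real.exp (-v) := by
    have hmono : MonotoneOn (fun v : ℝ => (2 + v) * Real.exp (-v) + v - 2) (Set.Ici 0) := by
      have hd : ∀ v : ℝ, HasDerivAt (fun v : ℝ => (2 + v) * Real.exp (-v) + v - 2)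
          (1 - (1 + v) * Real.exp (-v)) v := by
        intro v
        have h1 : HasDerivAt (fun v : ℝ => Real.exp (-v)) (-Real.exp (-v)) v := by
          simpa using (hasDerivAt_neg v).exp
        have h2 : HasDerivAt (fun v : ℝ => (2 + v) * Real.exp (-v))
            (1 * Real.exp (-v) + (2 + v) * (-Real.exp (-v))) v :=
          (((hasDerivAt_id v).const_add 2)).mul h1
        have := (h2.add (hasDerivAt_id v)).sub_const 2
        refine this.congr_deriv ?_
        ring
      apply monotoneOn_of_deriv_nonneg (convex_Ici 0)
      · exact (Continuous.continuousOn (by continuity))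
      · intro v _
        exact (hd v).differentiableAt.differentiableWithinAt
      · intro v hv
        rw [(hd v).deriv]
        rw [interior_Ici] at hv
        have h1 : (1 + v) * Real.exp (-v) ≤ 1 := by
          have ha := Real.add_one_le_exp v
          have hb : Real.exp v * Real.exp (-v) = 1 := by
            rw [← Real.exp_add]; simp
          nlinarith [Real.exp_pos (-v)]
        linarith
    intro v hv
    have := hmono (self_mem_Ici) hv hv
    simp only [add_zero, neg_zero, Real.exp_zero, mul_one] at this
    linarith
  have h := key u hu
  have hpos := Real.exp_pos u
  have : (2 - u) * Real.exp u ≤ (2 + u) * Real.exp (-u) * Real.exp u := by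
    nlinarith [Real.exp_pos u]
  rw [mul_assoc, ← Real.exp_add] at this
  simpa using this



lemma discrete_ineq (s u : ℝ) (hs : 0 ≤ s) (hu : 0 ≤ u) :
    (2*s+1) * (Real.exp u - 1) ≤ u * ((s+1) * Real.exp u + s) := by
  have hB : 0 ≤ Real.exp u - u - 1 := by nlinarith [Real.add_one_le_exp u]
  have hAB : Real.exp u - u - 1 ≤ u * Real.exp u - Real.exp u + 1 := by
    nlinarith [aux_k u hu]
  nlinarith [mul_nonneg hs (sub_nonneg.2 hAB)]

lemma key_ineq (s t : ℝ) (hs : 0 < s) (ht : 0 ≤ t) :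
    (s+1) * Real.exp (s*t) + s * Real.exp (-(s+1)*t)
      ≤ (2*s+1) * Real.exp (s*(s+1)*t^2/2) := by
  set A : ℝ → ℝ := fun t => (s+1) * Real.exp (s*t) + s * Real.exp (-(s+1)*t) with hA
  set ψ : ℝ → ℝ := fun t => A t * Real.exp (-(s*(s+1)*t^2/2)) with hψ
  have hdA : ∀ t : ℝ, HasDerivAt A (s*(s+1) * (Real.exp (s*t) - Real.exp (-(s+1)*t))) t := by
    intro t
    have h1 : HasDerivAt (fun t : ℝ => Real.exp (s*t)) (s * Real.exp (s*t)) t := by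
      simpa [mul_comm] using (((hasDerivAt_id t).const_mul s).exp)
    have h2 : HasDerivAt (fun t : ℝ => Real.exp (-(s+1)*t)) (-(s+1) * Real.exp (-(s+1)*t)) t := by
      simpa [mul_comm] using (((hasDerivAt_id t).const_mul (-(s+1))).exp)
    have := (h1.const_mul (s+1)).add (h2.const_mul s)
    refine this.congr_deriv ?_
    ring
  have hdE : ∀ t : ℝ, HasDerivAt (fun t : ℝ => Real.exp (-(s*(s+1)*t^2/2)))
      (-(s*(s+1)*t) * Real.exp (-(s*(s+1)*t^2/2))) t := by
    intro t
    have hp : HasDerivAt (fun t : ℝ => -(s*(s+1)*t^2/2)) (-(s*(s+1)*t)) t := by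
      have := ((hasDerivAt_pow 2 t).const_mul (s*(s+1))).div_const 2
      have := this.neg
      refine this.congr_deriv ?_
      ring
    simpa [mul_comm] using hp.exp
  have hdψ : ∀ t : ℝ, HasDerivAt ψ
      ((s*(s+1) * (Real.exp (s*t) - Real.exp (-(s+1)*t)) - s*(s+1)*t * A t)
        * Real.exp (-(s*(s+1)*t^2/2))) t := by
    intro t
    have := (hdA t).mul (hdE t)
    refine this.congr_deriv ?_
    ring
  have hanti : AntitoneOn ψ (Ici 0) := by
    apply antitoneOn_of_deriv_nonpos (convex_Ici 0)
    · exact Continuous.continuousOn (by fun_prop)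
    · intro t _
      exact (hdψ t).differentiableAt.differentiableWithinAt
    · intro t htt
      rw [interior_Ici] at htt
      have ht0 : (0:ℝ) < t := htt
      rw [(hdψ t).deriv]
      have hkey : Real.exp (s*t) - Real.exp (-(s+1)*t) ≤ t * A t := by
        have h := discrete_ineq s ((2*s+1)*t) hs.le (by positivity)
        have he1 : Real.exp ((2*s+1)*t) * Real.exp (-(s+1)*t) = Real.exp (s*t) := by
          rw [← Real.exp_add]; ring_nf
        have h2s : (0:ℝ) < 2*s+1 := by linarith
        have h'' : (2*s+1) * (Real.exp ((2*s+1)*t) - 1)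
            ≤ (2*s+1) * (t * ((s+1) * Real.exp ((2*s+1)*t) + s)) := by linarith [h, (by ring :
              ((2*s+1)*t) * ((s+1) * Real.exp ((2*s+1)*t) + s)
                = (2*s+1) * (t * ((s+1) * Real.exp ((2*s+1)*t) + s)))]
        have goal' := le_of_mul_le_mul_left h'' h2s
        have hmul := mul_le_mul_of_nonneg_right goal' (Real.exp_pos (-(s+1)*t)).le
        calc Real.exp (s*t) - Real.exp (-(s+1)*t)
            = (Real.exp ((2*s+1)*t) - 1) * Real.exp (-(s+1)*t) := by linear_combination -he1
          _ ≤ t * ((s+1) * Real.exp ((2*s+1)*t) + s) * Real.exp (-(s+1)*t) := hmul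
          _ = t * A t := by simp only [hA]; linear_combination t*(s+1)*he1
      have h2 : (0:ℝ) < Real.exp (-(s*(s+1)*t^2/2)) := Real.exp_pos _
      have h3 : s*(s+1) * (Real.exp (s*t) - Real.exp (-(s+1)*t)) - s*(s+1)*t * A t ≤ 0 := by
        have hss : (0:ℝ) < s*(s+1) := by nlinarith
        nlinarith
      exact mul_nonpos_of_nonpos_of_nonneg h3 h2.le
  have h0 : ψ t ≤ ψ 0 := hanti self_mem_Ici ht ht
  have hψ0 : ψ 0 = 2*s+1 := by simp [hψ, hA]; ring
  rw [hψ0] at h0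
  have hE : (0:ℝ) < Real.exp (-(s*(s+1)*t^2/2)) := Real.exp_pos _
  have hEE : Real.exp (-(s*(s+1)*t^2/2)) * Real.exp (s*(s+1)*t^2/2) = 1 := by
    rw [← Real.exp_add]; simp
  calc A t = A t * Real.exp (-(s*(s+1)*t^2/2)) * Real.exp (s*(s+1)*t^2/2) := by
        rw [mul_assoc, hEE, mul_one]
    _ ≤ (2*s+1) * Real.exp (s*(s+1)*t^2/2) := by
        apply mul_le_mul_of_nonneg_right h0 (Real.exp_pos _).le


lemma exp_mul_integrableOn_Ioi (k a : ℝ) (hk : 0 < k) :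
    IntegrableOn (fun y : ℝ => Real.exp (-(k*y))) (Set.Ioi a) := by
  simpa [neg_mul] using exp_neg_integrableOn_Ioi a hk

lemma integral_exp_mul_Ioi' (k a : ℝ) (hk : 0 < k) :
    ∫ y in Set.Ioi a, Real.exp (-(k*y)) = Real.exp (-(k*a))/k := by
  have := MeasureTheory.integral_comp_mul_right_Ioi (fun x => Real.exp (-x)) a hk
  simp only [smul_eq_mul] at this
  rw [integral_exp_neg_Ioi] at this
  calc ∫ y in Set.Ioi a, Real.exp (-(k*y)) = ∫ x in Set.Ioi a, Real.exp (-(x*k)) := by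
        simp [mul_comm]
    _ = k⁻¹ * Real.exp (-(a*k)) := this
    _ = Real.exp (-(k*a))/k := by rw [mul_comm a k]; ring

lemma exp_mul_integrableOn_Iic (k a : ℝ) (hk : 0 < k) :
    IntegrableOn (fun y : ℝ => Real.exp (k*y)) (Set.Iic a) := by
  refine (integrable_indicator_iff measurableSet_Iic).1 ?_
  have hbase : Integrable ((Set.Iic (k*a)).indicator Real.exp) :=
    (integrable_indicator_iff measurableSet_Iic).2 (integrableOn_exp_Iic _)
  have := hbase.comp_mul_left' (R := k) hk.ne'
  refine this.congr (Filter.Eventually.of_forall fun x => Eq.symm ?_)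
  beta_reduce
  by_cases hx : x ≤ a
  · rw [Set.indicator_of_mem (by exact hx : x ∈ Set.Iic a),
      Set.indicator_of_mem (by exact mul_le_mul_of_nonneg_left hx hk.le : k*x ∈ Set.Iic (k*a))]
  · rw [Set.indicator_of_notMem (by simpa using hx),
      Set.indicator_of_notMem (by simp only [Set.mem_Iic, not_le] at hx ⊢; exact (mul_lt_mul_iff_right₀ hk).2 hx)]

lemma integral_exp_mul_Iic' (k a : ℝ) (hk : 0 < k) :
    ∫ y in Set.Iic a, Real.exp (k*y) = Real.exp (k*a)/k := by
  have h := integral_comp_neg_Iic a (fun y : ℝ => Real.exp (-(k*y)))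
  simp only [neg_neg, mul_neg] at h
  rw [h, integral_exp_mul_Ioi' k (-a) hk]
  simp

lemma integral_exp_mul_Ioc (k x y : ℝ) (hk : 0 < k) (hxy : x ≤ y) :
    ∫ t in Set.Ioc x y, Real.exp (k*t) = (Real.exp (k*y) - Real.exp (k*x))/k := by
  rw [← intervalIntegral.integral_of_le hxy,
    intervalIntegral.integral_comp_mul_left (fun x => Real.exp x) hk.ne', integral_exp]
  simp [smul_eq_mul]
  ring


lemma uni_integral (b l δ : ℝ) (hb : 0 < b) (hl : 1 < l) (hδ : 0 ≤ δ) :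
    Integrable (fun y : ℝ => (2*b)⁻¹ * Real.exp ((l*(|y| - |y - δ|) - |y|)/b)) ∧
    ∫ y : ℝ, (2*b)⁻¹ * Real.exp ((l*(|y| - |y - δ|) - |y|)/b)
      = (l * Real.exp ((l-1)*δ/b) + (l-1) * Real.exp (-(l*δ)/b)) / (2*l-1) := by
  have hb' : b ≠ 0 := hb.ne'
  have h2l : (0:ℝ) < 2*l-1 := by linarith
  set f : ℝ → ℝ := fun y => (2*b)⁻¹ * Real.exp ((l*(|y| - |y - δ|) - |y|)/b) with hf
  -- piecewise descriptions
  have e1 : EqOn f (fun y => ((2*b)⁻¹ * Real.exp (-(l*δ)/b)) * Real.exp (b⁻¹*y)) (Set.Iic 0) := by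
    intro y hy
    simp only [Set.mem_Iic] at hy
    rw [hf]
    simp only
    rw [abs_of_nonpos hy, abs_of_nonpos (by linarith : y - δ ≤ 0),
      show (l*(-y - -(y - δ)) - -y)/b = -(l*δ)/b + b⁻¹*y by field_simp; ring, Real.exp_add]
    ring
  have e2 : EqOn f (fun y => ((2*b)⁻¹ * Real.exp (-(l*δ)/b)) * Real.exp (((2*l-1)/b)*y))
      (Set.Ioc 0 δ) := by
    intro y hy
    obtain ⟨hy1, hy2⟩ := hy
    rw [hf]
    simp only
    rw [abs_of_nonneg hy1.le, abs_of_nonpos (by linarith : y - δ ≤ 0),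
      show (l*(y - -(y - δ)) - y)/b = -(l*δ)/b + ((2*l-1)/b)*y by field_simp; ring, Real.exp_add]
    ring
  have e3 : EqOn f (fun y => ((2*b)⁻¹ * Real.exp ((l-1)*δ/b)) * Real.exp (-(b⁻¹*y) + b⁻¹*δ))
      (Set.Ioi δ) := by
    intro y hy
    simp only [Set.mem_Ioi] at hy
    rw [hf]
    simp only
    rw [abs_of_nonneg (by linarith : (0:ℝ) ≤ y), abs_of_nonneg (by linarith : (0:ℝ) ≤ y - δ),
      show (l*(y - (y - δ)) - y)/b = (l-1)*δ/b + (-(b⁻¹*y) + b⁻¹*δ) by field_simp; ring,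
      Real.exp_add]
    ring
  -- integrability on pieces
  have I1 : IntegrableOn f (Set.Iic 0) := by
    exact IntegrableOn.congr_fun
      (((exp_mul_integrableOn_Iic b⁻¹ 0 (by positivity))).const_mul _) e1.symm measurableSet_Iic
  have I2 : IntegrableOn f (Set.Ioc 0 δ) := by
    have : Continuous f := by fun_prop
    exact this.integrableOn_Ioc
  have I3 : IntegrableOn f (Set.Ioi δ) := by
    refine IntegrableOn.congr_fun ?_ e3.symm measurableSet_Ioi
    have base : IntegrableOn (fun y : ℝ => Real.exp (-(b⁻¹*y))) (Set.Ioi δ) :=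
      exp_mul_integrableOn_Ioi b⁻¹ δ (by positivity)
    simp_rw [Real.exp_add]
    exact ((base.mul_const _).const_mul _)
  have I23 : IntegrableOn f (Set.Ioi 0) := by
    rw [← Set.Ioc_union_Ioi_eq_Ioi hδ]
    exact I2.union I3
  have Iall : Integrable f := by
    rw [← integrableOn_univ, ← Set.Iic_union_Ioi (a := (0:ℝ))]
    exact I1.union I23
  refine ⟨Iall, ?_⟩
  have split1 : ∫ y, f y = (∫ y in Set.Iic 0, f y) + ∫ y in Set.Ioi 0, f y := by
    rw [← setIntegral_union (Set.Iic_disjoint_Ioi le_rfl) measurableSet_Ioi I1 I23,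
      Set.Iic_union_Ioi, setIntegral_univ]
  have split2 : ∫ y in Set.Ioi 0, f y = (∫ y in Set.Ioc 0 δ, f y) + ∫ y in Set.Ioi δ, f y := by
    rw [← setIntegral_union (Set.Ioc_disjoint_Ioi le_rfl) measurableSet_Ioi I2 I3,
      Set.Ioc_union_Ioi_eq_Ioi hδ]
  have v1 : ∫ y in Set.Iic 0, f y = Real.exp (-(l*δ)/b) / 2 := by
    rw [setIntegral_congr_fun measurableSet_Iic e1, integral_const_mul,
      integral_exp_mul_Iic' b⁻¹ 0 (by positivity)]
    rw [mul_zero, Real.exp_zero]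
    field_simp
  have v2 : ∫ y in Set.Ioc 0 δ, f y
      = Real.exp (-(l*δ)/b) * (Real.exp ((2*l-1)*δ/b) - 1) / (2*(2*l-1)) := by
    rw [setIntegral_congr_fun measurableSet_Ioc e2, integral_const_mul,
      integral_exp_mul_Ioc ((2*l-1)/b) 0 δ (by positivity) hδ]
    rw [mul_zero, Real.exp_zero, show (2*l-1)/b*δ = (2*l-1)*δ/b by ring]
    field_simp
  have v3 : ∫ y in Set.Ioi δ, f y = Real.exp ((l-1)*δ/b) / 2 := by
    rw [setIntegral_congr_fun measurableSet_Ioi e3]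
    simp_rw [Real.exp_add, ← mul_assoc]
    rw [integral_mul_const, integral_const_mul, integral_exp_mul_Ioi' b⁻¹ δ (by positivity)]
    have hEE : Real.exp (-(b⁻¹*δ)) * Real.exp (b⁻¹*δ) = 1 := by
      rw [← Real.exp_add]; simp
    rw [show (2*b)⁻¹ * Real.exp ((l-1)*δ/b) * (Real.exp (-(b⁻¹*δ))/b⁻¹) * Real.exp (b⁻¹*δ)
      = Real.exp ((l-1)*δ/b) * (Real.exp (-(b⁻¹*δ)) * Real.exp (b⁻¹*δ)) * ((2*b)⁻¹ * (b⁻¹)⁻¹) by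
        ring, hEE]
    rw [inv_inv]
    field_simp
  rw [split1, split2, v1, v2, v3]
  have key : Real.exp (-(l*δ)/b) * Real.exp ((2*l-1)*δ/b) = Real.exp ((l-1)*δ/b) := by
    rw [← Real.exp_add]
    congr 1
    field_simp
    ring
  rw [mul_sub, key, mul_one]
  have hinv : (2*(2*l-1)) * (2*(2*l-1))⁻¹ = 1 := mul_inv_cancel₀ (by positivity)
  rw [eq_div_iff h2l.ne']
  linear_combination ((Real.exp ((l-1)*δ/b) - Real.exp (-(l*δ)/b))/2) * hinv



lemma lintegral_fin_pi_prod : ∀ {n : ℕ} {α : Fin n → Type u} [inst : ∀ i, MeasurableSpace (α i)]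
    (μ : ∀ i, Measure (α i)) [∀ i, SigmaFinite (μ i)] (f : ∀ i, α i → ℝ≥0∞)
    (_ : ∀ i, Measurable (f i)),
    ∫⁻ x, ∏ i, f i (x i) ∂Measure.pi μ = ∏ i, ∫⁻ x, f i x ∂μ i := by
  intro n
  induction n with
  | zero =>
    intro α _ μ _ f hf
    simp [lintegral_const, Measure.pi_univ]
  | succ n ih =>
    intro α _ μ _ f hf
    calc ∫⁻ x, ∏ i, f i (x i) ∂Measure.pi μ
        = ∫⁻ z : α 0 × (∀ i : Fin n, α (Fin.succ i)),
            f 0 z.1 * ∏ i : Fin n, f (Fin.succ i) (z.2 i)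
            ∂((μ 0).prod (Measure.pi fun i => μ (Fin.succ i))) := by
          rw [← ((measurePreserving_piFinSuccAbove μ 0).symm).lintegral_comp_emb
            (MeasurableEquiv.measurableEmbedding _)]
          refine lintegral_congr fun z => ?_
          rw [Fin.prod_univ_succ]
          rfl
      _ = (∫⁻ x, f 0 x ∂μ 0) * ∏ i : Fin n, ∫⁻ x, f (Fin.succ i) x ∂μ (Fin.succ i) := by
          rw [lintegral_prod_mul (f := fun x => f 0 x)
            (g := fun y : ∀ i : Fin n, α (Fin.succ i) => ∏ i : Fin n, f (Fin.succ i) (y i))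
            (hf 0).aemeasurable
            (Finset.measurable_prod _ fun i _ => (hf _).comp (measurable_pi_apply i)).aemeasurable]
          rw [ih _ _ fun i => hf _]
      _ = ∏ i, ∫⁻ x, f i x ∂μ i := by rw [Fin.prod_univ_succ]

lemma pi_withDensity {n : ℕ} (μ : Fin n → Measure ℝ) [∀ i, SigmaFinite (μ i)]
    (f : Fin n → ℝ → ℝ≥0∞) (hf : ∀ i, Measurable (f i))
    [∀ i, SigmaFinite ((μ i).withDensity (f i))] :
    Measure.pi (fun i => (μ i).withDensity (f i))
      = (Measure.pi μ).withDensity (fun x => ∏ i, f i (x i)) := by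
  refine Measure.pi_eq fun s hs => ?_
  rw [withDensity_apply _ (MeasurableSet.univ_pi hs)]
  rw [← lintegral_indicator (MeasurableSet.univ_pi hs)]
  have : ∀ x : Fin n → ℝ, (Set.univ.pi s).indicator (fun x => ∏ i, f i (x i)) x
      = ∏ i, (s i).indicator (f i) (x i) := by
    intro x
    by_cases hx : x ∈ Set.univ.pi s
    · rw [Set.indicator_of_mem hx]
      exact Finset.prod_congr rfl fun i _ =>
        (Set.indicator_of_mem (Set.mem_univ_pi.1 hx i) _).symm
    · rw [Set.indicator_of_notMem hx]
      rw [Set.mem_pi] at hx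
      push_neg at hx
      obtain ⟨i, _, hi⟩ := hx
      exact (Finset.prod_eq_zero (Finset.mem_univ i)
        (Set.indicator_of_notMem hi _)).symm
  simp_rw [this]
  rw [lintegral_fin_pi_prod μ _ fun i => (hf i).indicator (by measurability)]
  exact Finset.prod_congr rfl fun i _ => by
    rw [lintegral_indicator (by measurability), ← withDensity_apply _ (by measurability)]


lemma uni_moment (b l : ℝ) (hb : 0 < b) (hl : 1 < l) (μ ν : ℝ) :
    Integrable (fun y : ℝ => (2*b)⁻¹ * Real.exp ((l*(|y - ν| - |y - μ|) - |y - ν|)/b)) ∧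
    ∫ y : ℝ, (2*b)⁻¹ * Real.exp ((l*(|y - ν| - |y - μ|) - |y - ν|)/b)
      = (l * Real.exp ((l-1)*|μ - ν|/b) + (l-1) * Real.exp (-(l*|μ - ν|)/b)) / (2*l-1) := by
  rcases le_or_gt ν μ with hle | hlt
  · have base := uni_integral b l (μ - ν) hb hl (by linarith)
    have habs : |μ - ν| = μ - ν := abs_of_nonneg (by linarith)
    have hfun : (fun y : ℝ => (2*b)⁻¹ * Real.exp ((l*(|y - ν| - |y - μ|) - |y - ν|)/b))
        = fun y => (2*b)⁻¹ * Real.exp ((l*(|y - ν| - |(y - ν) - (μ - ν)|) - |y - ν|)/b) := by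
      funext y; ring_nf
    constructor
    · rw [hfun]
      exact base.1.comp_sub_right ν
    · rw [hfun, habs]
      have := MeasureTheory.integral_sub_right_eq_self (μ := volume)
        (fun y : ℝ => (2*b)⁻¹ * Real.exp ((l*(|y| - |y - (μ - ν)|) - |y|)/b)) ν
      rw [this, base.2]
  · have base := uni_integral b l (ν - μ) hb hl (by linarith)
    have habs : |μ - ν| = ν - μ := by rw [abs_sub_comm]; exact abs_of_nonneg (by linarith)
    have hfun : (fun y : ℝ => (2*b)⁻¹ * Real.exp ((l*(|y - ν| - |y - μ|) - |y - ν|)/b))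
        = fun y => (2*b)⁻¹
            * Real.exp ((l*(|-(y - ν)| - |(-(y - ν)) - (ν - μ)|) - |-(y - ν)|)/b) := by
      funext y
      rw [show |(-(y - ν)) - (ν - μ)| = |y - μ| by
        rw [show -(y - ν) - (ν - μ) = -(y - μ) by ring, abs_neg], abs_neg]
    constructor
    · rw [hfun]
      exact (base.1.comp_neg).comp_sub_right ν
    · rw [hfun, habs]
      have h1 := MeasureTheory.integral_sub_right_eq_self (μ := volume)
        (fun y : ℝ => (2*b)⁻¹ * Real.exp ((l*(|-y| - |(-y) - (ν - μ)|) - |-y|)/b)) ν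
      have h2 := MeasureTheory.integral_neg_eq_self
        (fun y : ℝ => (2*b)⁻¹ * Real.exp ((l*(|y| - |y - (ν - μ)|) - |y|)/b)) volume
      rw [h1, h2, base.2]

end AuxiliaryLemmas

section MainLemmas
open Real Set MeasureTheory
open scoped ENNReal




lemma laplace_pdf_integral (b μ0 : ℝ) (hb : 0 < b) :
    Integrable (fun z : ℝ => (2*b)⁻¹ * Real.exp (-|z - μ0|/b)) ∧
    ∫ z : ℝ, (2*b)⁻¹ * Real.exp (-|z - μ0|/b) = 1 := by
  have base := uni_moment b 2 hb one_lt_two μ0 μ0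
  have hfun : (fun y : ℝ => (2*b)⁻¹ * Real.exp ((2*(|y - μ0| - |y - μ0|) - |y - μ0|)/b))
      = fun z => (2*b)⁻¹ * Real.exp (-|z - μ0|/b) := by
    funext y; ring_nf
  rw [hfun] at base
  refine ⟨base.1, ?_⟩
  rw [base.2]
  simp
  norm_num

lemma laplace_prob (b μ0 : ℝ) (hb : 0 < b) : IsProbabilityMeasure (laplace b μ0) := by
  constructor
  rw [laplace, withDensity_apply _ MeasurableSet.univ, Measure.restrict_univ,
    ← ofReal_integral_eq_lintegral_ofReal (laplace_pdf_integral b μ0 hb).1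
      (Filter.Eventually.of_forall fun y => by positivity),
    (laplace_pdf_integral b μ0 hb).2]
  norm_num

lemma renyi_half (b Δinf : ℝ) (Δ₀ d : ℕ) (hb : 0 < b) (hΔinf : 0 ≤ Δinf)
    (c c' : Fin d → ℝ) (h0 : {j | c j ≠ c' j}.ncard ≤ Δ₀)
    (hinf : ∀ j, |c j - c' j| ≤ Δinf) (l : ℝ) (hl : 1 < l) :
    renyiDiv (Measure.pi fun j => laplace b (c j)) (Measure.pi fun j => laplace b (c' j)) l
        ≤ l * Δ₀ * Δinf ^ 2 / (2 * b ^ 2) := by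
  classical
  have hb' : b ≠ 0 := hb.ne'
  have hl0 : (0:ℝ) < l - 1 := by linarith
  set P := Measure.pi fun j => laplace b (c j) with hPdef
  set Q := Measure.pi fun j => laplace b (c' j) with hQdef
  set p : Fin d → ℝ → ℝ := fun j z => (2*b)⁻¹ * Real.exp (-|z - c j|/b) with hp
  set q : Fin d → ℝ → ℝ := fun j z => (2*b)⁻¹ * Real.exp (-|z - c' j|/b) with hq
  have hppos : ∀ j z, 0 < p j z := fun j z => by simp only [hp]; positivity
  have hqpos : ∀ j z, 0 < q j z := fun j z => by simp only [hq]; positivity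
  set F : (Fin d → ℝ) → ℝ≥0∞ := fun x => ∏ j, ENNReal.ofReal (p j (x j)) with hF
  set G : (Fin d → ℝ) → ℝ≥0∞ := fun x => ∏ j, ENNReal.ofReal (q j (x j)) with hG
  have hmp : ∀ j, Measurable fun z : ℝ => ENNReal.ofReal (p j z) := fun j =>
    ENNReal.continuous_ofReal.measurable.comp (Continuous.measurable (by fun_prop))
  have hmq : ∀ j, Measurable fun z : ℝ => ENNReal.ofReal (q j z) := fun j =>
    ENNReal.continuous_ofReal.measurable.comp (Continuous.measurable (by fun_prop))
  have hFm : Measurable F :=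
    Finset.measurable_prod _ fun j _ => (hmp j).comp (measurable_pi_apply j)
  have hGm : Measurable G :=
    Finset.measurable_prod _ fun j _ => (hmq j).comp (measurable_pi_apply j)
  haveI hprob : ∀ μ0 : ℝ, IsProbabilityMeasure (laplace b μ0) := fun μ0 => laplace_prob b μ0 hb
  haveI : ∀ j, SigmaFinite (laplace b (c j)) := fun j => inferInstance
  haveI : ∀ j, SigmaFinite (laplace b (c' j)) := fun j => inferInstance
  haveI hS1 : ∀ j, SigmaFinite
      ((volume : Measure ℝ).withDensity fun z => ENNReal.ofReal (p j z)) := fun j =>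
    inferInstanceAs (SigmaFinite (laplace b (c j)))
  haveI hS2 : ∀ j, SigmaFinite
      ((volume : Measure ℝ).withDensity fun z => ENNReal.ofReal (q j z)) := fun j =>
    inferInstanceAs (SigmaFinite (laplace b (c' j)))
  have hP : P = (volume : Measure (Fin d → ℝ)).withDensity F := by
    rw [hPdef, show (fun j => laplace b (c j)) = fun j =>
      (volume : Measure ℝ).withDensity fun z => ENNReal.ofReal (p j z) from rfl,
      pi_withDensity _ _ (fun j => hmp j), ← volume_pi]
  have hQ : Q = (volume : Measure (Fin d → ℝ)).withDensity G := by
    rw [hQdef, show (fun j => laplace b (c' j)) = fun j =>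
      (volume : Measure ℝ).withDensity fun z => ENNReal.ofReal (q j z) from rfl,
      pi_withDensity _ _ (fun j => hmq j), ← volume_pi]
  have hG0 : ∀ x, G x ≠ 0 := fun x => by
    simp only [hG]
    rw [Finset.prod_ne_zero_iff]
    exact fun j _ => (ENNReal.ofReal_pos.2 (hqpos j (x j))).ne'
  have hGtop : ∀ x, G x ≠ ⊤ := fun x =>
    (ENNReal.prod_lt_top fun j _ => ENNReal.ofReal_lt_top).ne
  haveI : SigmaFinite P := by rw [hPdef]; infer_instance
  have hrn : P.rnDeriv Q =ᵐ[volume] fun x => (G x)⁻¹ * F x := by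
    have h1 : P.rnDeriv (volume.withDensity G)
        =ᵐ[volume] fun x => (G x)⁻¹ * P.rnDeriv volume x :=
      Measure.rnDeriv_withDensity_right P volume hGm.aemeasurable
        (Filter.Eventually.of_forall hG0) (Filter.Eventually.of_forall hGtop)
    have h2 : P.rnDeriv volume =ᵐ[volume] F := by
      rw [hP]; exact Measure.rnDeriv_withDensity volume hFm
    rw [hQ]
    filter_upwards [h1, h2] with x hx1 hx2
    rw [hx1, hx2]
  have hQac : Q ≪ (volume : Measure (Fin d → ℝ)) := by
    rw [hQ]; exact withDensity_absolutelyContinuous _ _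
  set H : (Fin d → ℝ) → ℝ :=
    fun y => ∏ j, Real.exp (l * ((|y j - c' j| - |y j - c j|)/b)) with hH
  have hHpos : ∀ y, 0 < H y := fun y => Finset.prod_pos fun j _ => Real.exp_pos _
  have hae : (fun y => ((P.rnDeriv Q) y).toReal ^ l) =ᵐ[Q] H := by
    filter_upwards [hQac.ae_le hrn] with y hy
    rw [hy]
    have hGx : (G y).toReal = ∏ j, q j (y j) := by
      simp only [hG]
      rw [← ENNReal.ofReal_prod_of_nonneg (fun j _ => (hqpos j (y j)).le),
        ENNReal.toReal_ofReal (Finset.prod_nonneg fun j _ => (hqpos j (y j)).le)]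
    have hFx : (F y).toReal = ∏ j, p j (y j) := by
      simp only [hF]
      rw [← ENNReal.ofReal_prod_of_nonneg (fun j _ => (hppos j (y j)).le),
        ENNReal.toReal_ofReal (Finset.prod_nonneg fun j _ => (hppos j (y j)).le)]
    rw [ENNReal.toReal_mul, ENNReal.toReal_inv, hGx, hFx]
    have hdiv : (∏ j, q j (y j))⁻¹ * ∏ j, p j (y j)
        = ∏ j, Real.exp ((|y j - c' j| - |y j - c j|)/b) := by
      rw [inv_mul_eq_div, ← Finset.prod_div_distrib]
      refine Finset.prod_congr rfl fun j _ => ?_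
      simp only [hp, hq]
      rw [mul_div_mul_left _ _ (by positivity : ((2:ℝ)*b)⁻¹ ≠ 0), ← Real.exp_sub]
      congr 1
      ring
    rw [hdiv, ← Real.exp_sum, ← Real.exp_mul]
    simp only [hH]
    rw [← Real.exp_sum]
    congr 1
    rw [mul_comm, Finset.mul_sum]
  have hHm : Measurable H := by
    refine Finset.measurable_prod _ fun j _ => Continuous.measurable ?_
    fun_prop
  set w : Fin d → ℝ → ℝ := fun j z => Real.exp (l * ((|z - c' j| - |z - c j|)/b)) * q j z with hw
  have hwm : ∀ j, Measurable fun z : ℝ => ENNReal.ofReal (w j z) := fun j =>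
    ENNReal.continuous_ofReal.measurable.comp (Continuous.measurable
      (by simp only [hw, hq]; fun_prop))
  have hlcalc : ∫⁻ y, ENNReal.ofReal (H y) ∂Q = ∏ j, ∫⁻ z, ENNReal.ofReal (w j z) := by
    rw [hQ, lintegral_withDensity_eq_lintegral_mul _ hGm
      (g := fun y => ENNReal.ofReal (H y)) (ENNReal.continuous_ofReal.measurable.comp hHm)]
    have hptw : ∀ y : Fin d → ℝ, (G * fun y => ENNReal.ofReal (H y)) y
        = ∏ j, ENNReal.ofReal (w j (y j)) := by
      intro y
      simp only [Pi.mul_apply, hG, hH, hw]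
      rw [ENNReal.ofReal_prod_of_nonneg (fun j _ => (Real.exp_pos _).le),
        ← Finset.prod_mul_distrib]
      exact Finset.prod_congr rfl fun j _ => by
        rw [← ENNReal.ofReal_mul (hqpos j (y j)).le, mul_comm]
    simp_rw [hptw]
    rw [volume_pi, lintegral_fin_pi_prod _ _ hwm]
  set e : Fin d → ℝ := fun j => l*(l-1)*(c j - c' j)^2/(2*b^2) with he
  have hfac : ∀ j, ∫⁻ z, ENNReal.ofReal (w j z) ≤ ENNReal.ofReal (Real.exp (e j)) := by
    intro j
    have hwfun : (fun z => ENNReal.ofReal (w j z))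
        = fun y => ENNReal.ofReal ((2*b)⁻¹
            * Real.exp ((l*(|y - c' j| - |y - c j|) - |y - c' j|)/b)) := by
      funext z
      congr 1
      simp only [hw, hq]
      rw [show Real.exp (l*((|z - c' j| - |z - c j|)/b)) * ((2*b)⁻¹ * Real.exp (-|z - c' j|/b))
          = (2*b)⁻¹ * (Real.exp (l*((|z - c' j| - |z - c j|)/b)) * Real.exp (-|z - c' j|/b)) by
          ring, ← Real.exp_add]
      congr 2
      field_simp
      ring
    rw [hwfun, ← ofReal_integral_eq_lintegral_ofReal (uni_moment b l hb hl (c j) (c' j)).1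
      (Filter.Eventually.of_forall fun y => by positivity)]
    apply ENNReal.ofReal_le_ofReal
    rw [(uni_moment b l hb hl (c j) (c' j)).2]
    have hk := key_ineq (l-1) (|c j - c' j|/b) hl0 (by positivity)
    have h2l : (0:ℝ) < 2*l - 1 := by linarith
    rw [div_le_iff₀ h2l]
    calc l * Real.exp ((l-1)*|c j - c' j|/b) + (l-1) * Real.exp (-(l*|c j - c' j|)/b)
        = (l-1+1) * Real.exp ((l-1)*(|c j - c' j|/b))
            + (l-1) * Real.exp (-(l-1+1)*(|c j - c' j|/b)) := by
          rw [show (l-1)*(|c j - c' j|/b) = (l-1)*|c j - c' j|/b by ring,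
            show -(l-1+1)*(|c j - c' j|/b) = -(l*|c j - c' j|)/b by ring]
          ring_nf
      _ ≤ (2*(l-1)+1) * Real.exp ((l-1)*((l-1)+1)*(|c j - c' j|/b)^2/2) := hk
      _ = Real.exp (e j) * (2*l-1) := by
          rw [show (l-1)*((l-1)+1)*(|c j - c' j|/b)^2/2 = e j by
            simp only [he]; rw [div_pow, sq_abs]; field_simp; ring]
          ring
  have hsum : ∑ j, e j ≤ (l-1) * (l * Δ₀ * Δinf^2 / (2*b^2)) := by
    have hsq : ∑ j, (c j - c' j)^2 ≤ (Δ₀:ℝ) * Δinf^2 := by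
      have hfilter : ∑ j, (c j - c' j)^2
          = ∑ j ∈ Finset.univ.filter (fun j => c j ≠ c' j), (c j - c' j)^2 := by
        rw [Finset.sum_filter_of_ne]
        intro x _ hx hc
        apply hx
        rw [hc]; ring
      have hcard : ((Finset.univ.filter (fun j => c j ≠ c' j)).card : ℝ) ≤ (Δ₀:ℝ) := by
        have hh : (Finset.univ.filter (fun j => c j ≠ c' j)).card
            = {j | c j ≠ c' j}.ncard := by
          rw [Set.ncard_eq_toFinset_card']
          congr 1
          ext x
          simp
        exact_mod_cast hh ▸ h0
      calc ∑ j, (c j - c' j)^2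
          = ∑ j ∈ Finset.univ.filter (fun j => c j ≠ c' j), (c j - c' j)^2 := hfilter
        _ ≤ (Finset.univ.filter (fun j => c j ≠ c' j)).card • (Δinf^2) :=
            Finset.sum_le_card_nsmul _ _ _ fun x _ => by
              have := hinf x
              nlinarith [abs_nonneg (c x - c' x), sq_abs (c x - c' x)]
        _ = ((Finset.univ.filter (fun j => c j ≠ c' j)).card : ℝ) * Δinf^2 := by
            rw [nsmul_eq_mul]
        _ ≤ (Δ₀:ℝ) * Δinf^2 := mul_le_mul_of_nonneg_right hcard (by positivity)
    simp only [he]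
    rw [← Finset.sum_div, ← Finset.mul_sum,
      div_le_iff₀ (by positivity : (0:ℝ) < 2*b^2)]
    calc l*(l-1) * ∑ j, (c j - c' j)^2 ≤ l*(l-1) * ((Δ₀:ℝ) * Δinf^2) :=
          mul_le_mul_of_nonneg_left hsq (by nlinarith)
      _ = (l-1) * (l * Δ₀ * Δinf^2 / (2*b^2)) * (2*b^2) := by field_simp
  have hIle : ∫ y, ((P.rnDeriv Q) y).toReal ^ l ∂Q
      ≤ Real.exp ((l-1) * (l * Δ₀ * Δinf^2 / (2*b^2))) := by
    rw [integral_congr_ae hae,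
      integral_eq_lintegral_of_nonneg_ae (Filter.Eventually.of_forall fun y => (hHpos y).le)
        hHm.aestronglyMeasurable]
    have hb1 : ∫⁻ y, ENNReal.ofReal (H y) ∂Q
        ≤ ENNReal.ofReal (Real.exp ((l-1) * (l * Δ₀ * Δinf^2 / (2*b^2)))) := by
      rw [hlcalc]
      calc ∏ j, ∫⁻ z, ENNReal.ofReal (w j z) ≤ ∏ j, ENNReal.ofReal (Real.exp (e j)) :=
            Finset.prod_le_prod' fun j _ => hfac j
        _ = ENNReal.ofReal (∏ j, Real.exp (e j)) :=
            (ENNReal.ofReal_prod_of_nonneg fun j _ => (Real.exp_pos _).le).symm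
        _ = ENNReal.ofReal (Real.exp (∑ j, e j)) := by rw [Real.exp_sum]
        _ ≤ _ := ENNReal.ofReal_le_ofReal (Real.exp_le_exp.2 hsum)
    calc (∫⁻ y, ENNReal.ofReal (H y) ∂Q).toReal
        ≤ (ENNReal.ofReal (Real.exp ((l-1) * (l * Δ₀ * Δinf^2 / (2*b^2))))).toReal :=
          ENNReal.toReal_mono ENNReal.ofReal_ne_top hb1
      _ = _ := ENNReal.toReal_ofReal (Real.exp_pos _).le
  have hInn : 0 ≤ ∫ y, ((P.rnDeriv Q) y).toReal ^ l ∂Q :=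
    integral_nonneg fun y => Real.rpow_nonneg ENNReal.toReal_nonneg l
  have hlog : Real.log (∫ y, ((P.rnDeriv Q) y).toReal ^ l ∂Q)
      ≤ (l-1) * (l * Δ₀ * Δinf^2 / (2*b^2)) := by
    rcases eq_or_lt_of_le hInn with hzero | hpos
    · rw [← hzero, Real.log_zero]
      positivity
    · calc Real.log (∫ y, ((P.rnDeriv Q) y).toReal ^ l ∂Q)
          ≤ Real.log (Real.exp ((l-1) * (l * Δ₀ * Δinf^2 / (2*b^2)))) :=
            Real.log_le_log hpos hIle
        _ = (l-1) * (l * Δ₀ * Δinf^2 / (2*b^2)) := Real.log_exp _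
  rw [renyiDiv]
  calc (l - 1)⁻¹ * Real.log (∫ y, ((P.rnDeriv Q) y).toReal ^ l ∂Q)
      ≤ (l - 1)⁻¹ * ((l-1) * (l * Δ₀ * Δinf^2 / (2*b^2))) :=
        mul_le_mul_of_nonneg_left hlog (by positivity)
    _ = l * Δ₀ * Δinf^2 / (2*b^2) := by field_simp


end MainLemmas

/-- Rényi divergence bound for product Laplace mechanisms: if `c, c′ ∈ ℝ^d` differ in at most
`Δ₀` coordinates, each by at most `Δinf`, then the products of Laplace distributions with
locations `c_j` (resp. `c′_j`) and scale `b` satisfy `D_l(P‖Q) ≤ l·Δ₀·Δinf²/(2b²)` and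
`D_l(Q‖P) ≤ l·Δ₀·Δinf²/(2b²)` for all `l > 1`. -/
theorem laplace_product_renyi_bound (b Δinf : ℝ) (Δ₀ d : ℕ) (hb : 0 < b) (hΔinf : 0 ≤ Δinf)
    (c c' : Fin d → ℝ) (h0 : {j | c j ≠ c' j}.ncard ≤ Δ₀)
    (hinf : ∀ j, |c j - c' j| ≤ Δinf) (l : ℝ) (hl : 1 < l) :
    renyiDiv (Measure.pi fun j => laplace b (c j)) (Measure.pi fun j => laplace b (c' j)) l
        ≤ l * Δ₀ * Δinf ^ 2 / (2 * b ^ 2) ∧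
    renyiDiv (Measure.pi fun j => laplace b (c' j)) (Measure.pi fun j => laplace b (c j)) l
        ≤ l * Δ₀ * Δinf ^ 2 / (2 * b ^ 2) := by
  constructor
  · exact renyi_half b Δinf Δ₀ d hb hΔinf c c' h0 hinf l hl
  · refine renyi_half b Δinf Δ₀ d hb hΔinf c' c ?_ ?_ l hl
    · have hset : {j | c' j ≠ c j} = {j | c j ≠ c' j} := by
        ext j; simp [ne_comm]
      rw [hset]; exact h0
    · intro j; rw [abs_sub_comm]; exact hinf j
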